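/- Let T be a monad on Pos whose underlying functor preserves surjections. Then: (1) for every discrete poset X, the free algebra (TX, μ_X) is so-projective in the Eilenberg–Moore category Pos^T; (2) Pos^T has enough projectives, a projective cover being given by the full subcategory of algebras free on discrete posets. Consequently, if T moreover preserves coinserters of congruences, then Pos^T is equivalent to the exact completion (Kl(T)_d)_ex of the full subcategory of the Kleisli category on algebras free on discrete posets. -/

import Mathlib

open CategoryTheory

universe w v u v' u' v'' u''

/-- A `Pos`-enriched category: each hom-set carries a partial order and
composition is monotone in both variables. -/
class PosEnriched (C : Type u) [Category.{v} C] where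
  homOrder : ∀ X Y : C, PartialOrder (X ⟶ Y)
  comp_mono : ∀ {X Y Z : C} {f f' : X ⟶ Y} {g g' : Y ⟶ Z},
    (homOrder X Y).le f f' → (homOrder Y Z).le g g' → (homOrder X Z).le (f ≫ g) (f' ≫ g')

attribute [instance] PosEnriched.homOrder

namespace PosEnr

variable {C : Type u} [Category.{v} C] [PosEnriched C]

theorem comp_mono' {X Y Z : C} {f f' : X ⟶ Y} {g g' : Y ⟶ Z} (h : f ≤ f') (h' : g ≤ g') :
    f ≫ g ≤ f' ≫ g' := PosEnriched.comp_mono h h'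

/-- `m` is an order-monomorphism (ff-morphism): postcomposition reflects the order
(hence, by antisymmetry, is also injective). -/
def OrderMono {X Y : C} (m : X ⟶ Y) : Prop :=
  ∀ {Z : C} (u v : Z ⟶ X), u ≫ m ≤ v ≫ m → u ≤ v

/-- `e` is an so-morphism: it is left orthogonal, in the `Pos`-enriched sense, to all
order-monomorphisms (the relevant square of hom-posets is a pullback in `Pos`). -/
def IsSo {A B : C} (e : A ⟶ B) : Prop :=
  ∀ {X Y : C} (m : X ⟶ Y), OrderMono m →
    (∀ (f : A ⟶ X) (g : B ⟶ Y), f ≫ m = e ≫ g → ∃ h : B ⟶ X, e ≫ h = f ∧ h ≫ m = g) ∧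
    (∀ h h' : B ⟶ X, e ≫ h ≤ e ≫ h' → h ≫ m ≤ h' ≫ m → h ≤ h')

/-- `e : I ⟶ X` is the (conical, `Pos`-enriched) inserter of the ordered pair `(f, g)`. -/
def IsInserterP {X Y I : C} (f g : X ⟶ Y) (e : I ⟶ X) : Prop :=
  e ≫ f ≤ e ≫ g ∧
  (∀ {Z : C} (h : Z ⟶ X), h ≫ f ≤ h ≫ g → ∃ u : Z ⟶ I, u ≫ e = h) ∧
  OrderMono e

/-- A weak inserter: only the existence part of the universal property. -/
def IsWeakInserter {X Y I : C} (f g : X ⟶ Y) (e : I ⟶ X) : Prop :=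
  e ≫ f ≤ e ≫ g ∧
  (∀ {Z : C} (h : Z ⟶ X), h ≫ f ≤ h ≫ g → ∃ u : Z ⟶ I, u ≫ e = h)

/-- `q : Y ⟶ Q` is the coinserter of the ordered pair `(u, v)`. -/
def IsCoinserterP {X Y Q : C} (u v : X ⟶ Y) (q : Y ⟶ Q) : Prop :=
  u ≫ q ≤ v ≫ q ∧
  (∀ {Z : C} (h : Y ⟶ Z), u ≫ h ≤ v ≫ h → ∃ t : Q ⟶ Z, q ≫ t = h) ∧
  (∀ {Z : C} (h h' : Q ⟶ Z), q ≫ h ≤ q ≫ h' → h ≤ h')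

/-- `(c0, c1)` is the comma object (lax pullback) of the ordered pair `(f, g)`. -/
def IsCommaP {X Y Z P : C} (f : X ⟶ Z) (g : Y ⟶ Z) (c0 : P ⟶ X) (c1 : P ⟶ Y) : Prop :=
  c0 ≫ f ≤ c1 ≫ g ∧
  (∀ {A : C} (u0 : A ⟶ X) (u1 : A ⟶ Y), u0 ≫ f ≤ u1 ≫ g →
      ∃ w : A ⟶ P, w ≫ c0 = u0 ∧ w ≫ c1 = u1) ∧
  (∀ {A : C} (w w' : A ⟶ P), w ≫ c0 ≤ w' ≫ c0 → w ≫ c1 ≤ w' ≫ c1 → w ≤ w')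

/-- An effective epimorphism: a coinserter of some pair. -/
def EffectiveEpiP {Y Q : C} (q : Y ⟶ Q) : Prop :=
  ∃ (X : C) (u v : X ⟶ Y), IsCoinserterP u v q

/-- Binary product in the `Pos`-enriched (conical) sense. -/
def IsBinProdP {X Y P : C} (p : P ⟶ X) (q : P ⟶ Y) : Prop :=
  (∀ {Z : C} (f : Z ⟶ X) (g : Z ⟶ Y), ∃ h : Z ⟶ P, h ≫ p = f ∧ h ≫ q = g) ∧
  (∀ {Z : C} (h h' : Z ⟶ P), h ≫ p ≤ h' ≫ p → h ≫ q ≤ h' ≫ q → h ≤ h')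

/-- Terminal object in the `Pos`-enriched sense. -/
def IsTerminalP (T : C) : Prop :=
  ∀ X : C, ∃ f : X ⟶ T, ∀ g : X ⟶ T, g = f

/-- Product of a (possibly infinite) family in the `Pos`-enriched sense. -/
def IsProdFamP {ι : Type w} (X : ι → C) (P : C) (p : ∀ i, P ⟶ X i) : Prop :=
  (∀ {Z : C} (f : ∀ i, Z ⟶ X i), ∃ h : Z ⟶ P, ∀ i, h ≫ p i = f i) ∧
  (∀ {Z : C} (h h' : Z ⟶ P), (∀ i, h ≫ p i ≤ h' ≫ p i) → h ≤ h')

/-- Weak product of a family: only the existence part. -/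
def IsWeakProdFam {ι : Type w} (X : ι → C) (P : C) (p : ∀ i, P ⟶ X i) : Prop :=
  ∀ {Z : C} (f : ∀ i, Z ⟶ X i), ∃ h : Z ⟶ P, ∀ i, h ≫ p i = f i

/-- Pullback in the `Pos`-enriched (conical) sense. -/
def IsPullbackP {X Y Z P : C} (f : X ⟶ Z) (g : Y ⟶ Z) (p0 : P ⟶ X) (p1 : P ⟶ Y) : Prop :=
  p0 ≫ f = p1 ≫ g ∧
  (∀ {A : C} (u0 : A ⟶ X) (u1 : A ⟶ Y), u0 ≫ f = u1 ≫ g →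
      ∃ w : A ⟶ P, w ≫ p0 = u0 ∧ w ≫ p1 = u1) ∧
  (∀ {A : C} (w w' : A ⟶ P), w ≫ p0 ≤ w' ≫ p0 → w ≫ p1 ≤ w' ≫ p1 → w ≤ w')

/-- A congruence, given by a jointly order-monic pair which is order-reflexive and
transitive (in terms of generalized elements). -/
def IsCongPair {S X : C} (s0 s1 : S ⟶ X) : Prop :=
  (∀ {A : C} (u v : A ⟶ S), u ≫ s0 ≤ v ≫ s0 → u ≫ s1 ≤ v ≫ s1 → u ≤ v) ∧
  (∀ {A : C} (a0 a1 : A ⟶ X), a0 ≤ a1 → ∃ u : A ⟶ S, u ≫ s0 = a0 ∧ u ≫ s1 = a1) ∧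
  (∀ {A : C} (u v : A ⟶ S), u ≫ s1 = v ≫ s0 →
      ∃ t : A ⟶ S, t ≫ s0 = u ≫ s0 ∧ t ≫ s1 = v ≫ s1)

/-- An so-projective object: its covariant hom-functor to `Pos` preserves so-morphisms
(equivalently, sends them to surjections). -/
def SoProjective (P : C) : Prop :=
  ∀ {A B : C} (e : A ⟶ B), IsSo e → ∀ f : P ⟶ B, ∃ g : P ⟶ A, g ≫ e = f

end PosEnr

/-- A weight `W : D ⥤ Pos` for `Pos`-enriched weighted limits, given concretely. -/
structure PosWeight (D : Type u') [Category.{v'} D] [PosEnriched D] where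
  obj : D → Type
  po : ∀ d, PartialOrder (obj d)
  map : ∀ {d d' : D}, (d ⟶ d') → obj d → obj d'
  map_monotone : ∀ {d d' : D} (f : d ⟶ d') (x y : obj d),
    (po d).le x y → (po d').le (map f x) (map f y)
  map_id : ∀ (d : D) (x : obj d), map (𝟙 d) x = x
  map_comp : ∀ {d d' d'' : D} (f : d ⟶ d') (g : d' ⟶ d'') (x : obj d),
    map (f ≫ g) x = map g (map f x)
  map_le : ∀ {d d' : D} {f g : d ⟶ d'}, f ≤ g → ∀ x : obj d, (po d').le (map f x) (map g x)

attribute [instance] PosWeight.po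

/-- A finite weight: finitely many objects, finite hom-posets, finite values. -/
def PosWeight.IsFiniteWeight {D : Type u'} [Category.{v'} D] [PosEnriched D]
    (W : PosWeight D) : Prop :=
  Finite D ∧ (∀ d d' : D, Finite (d ⟶ d')) ∧ ∀ d, Finite (W.obj d)

/-- A `Pos`-enriched (locally monotone) functor. -/
structure PosFunctor (C : Type u) (E : Type u') [Category.{v} C] [Category.{v'} E]
    [PosEnriched C] [PosEnriched E] where
  toFunctor : C ⥤ E
  map_le : ∀ {X Y : C} {f g : X ⟶ Y}, f ≤ g → toFunctor.map f ≤ toFunctor.map g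

/-- Composition of `Pos`-enriched functors. -/
def PosFunctor.comp {D : Type u''} {C : Type u} {E : Type u'}
    [Category.{v''} D] [Category.{v} C] [Category.{v'} E]
    [PosEnriched D] [PosEnriched C] [PosEnriched E]
    (G : PosFunctor D C) (F : PosFunctor C E) : PosFunctor D E where
  toFunctor := G.toFunctor ⋙ F.toFunctor
  map_le h := F.map_le (G.map_le h)

/-- A cylinder (`Pos`-natural transformation) `W ⟶ C(L, F-)`. -/
structure Cylinder {D : Type u'} [Category.{v'} D] [PosEnriched D] (W : PosWeight D)
    {E : Type u} [Category.{v} E] [PosEnriched E] (F : PosFunctor D E) (L : E) where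
  app : ∀ d : D, W.obj d → (L ⟶ F.toFunctor.obj d)
  monotone : ∀ (d : D) (x y : W.obj d), (W.po d).le x y → app d x ≤ app d y
  naturality : ∀ {d d' : D} (f : d ⟶ d') (x : W.obj d),
    app d x ≫ F.toFunctor.map f = app d' (W.map f x)

/-- The image of a cylinder under a `Pos`-enriched functor. -/
def Cylinder.mapF {D : Type u''} {C : Type u} {E : Type u'}
    [Category.{v''} D] [Category.{v} C] [Category.{v'} E]
    [PosEnriched D] [PosEnriched C] [PosEnriched E]
    {W : PosWeight D} {G : PosFunctor D C} {L : C}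
    (F : PosFunctor C E) (c : Cylinder W G L) :
    Cylinder W (G.comp F) (F.toFunctor.obj L) where
  app d x := F.toFunctor.map (c.app d x)
  monotone d x y h := F.map_le (c.monotone d x y h)
  naturality f x := by
    show F.toFunctor.map _ ≫ F.toFunctor.map _ = _
    rw [← F.toFunctor.map_comp, c.naturality]

/-- `L` with cylinder `c` is a weak `W`-weighted limit of `F`:
the induced comparison maps on hom-posets are surjective. -/
def IsWeakWeightedLimitP {D : Type u'} [Category.{v'} D] [PosEnriched D] (W : PosWeight D)
    {E : Type u} [Category.{v} E] [PosEnriched E] (F : PosFunctor D E)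
    (L : E) (c : Cylinder W F L) : Prop :=
  ∀ (Z : E) (φ : Cylinder W F Z), ∃ h : Z ⟶ L, ∀ (d : D) (x : W.obj d),
    h ≫ c.app d x = φ.app d x

/-- `L` with cylinder `c` is a (strong) `W`-weighted limit of `F`. -/
def IsWeightedLimitP {D : Type u'} [Category.{v'} D] [PosEnriched D] (W : PosWeight D)
    {E : Type u} [Category.{v} E] [PosEnriched E] (F : PosFunctor D E)
    (L : E) (c : Cylinder W F L) : Prop :=
  IsWeakWeightedLimitP W F L c ∧
  ∀ (Z : E) (h h' : Z ⟶ L), (∀ (d : D) (x : W.obj d), h ≫ c.app d x ≤ h' ≫ c.app d x) → h ≤ h'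

/-- A weakly lex `Pos`-category: all weak finite weighted limits exist. -/
def WeaklyLex (C : Type u) [Category.{v} C] [PosEnriched C] : Prop :=
  ∀ (D : Type) [SmallCategory D] [PosEnriched D] (W : PosWeight D) (F : PosFunctor D C),
    W.IsFiniteWeight → ∃ (L : C) (c : Cylinder W F L), IsWeakWeightedLimitP W F L c

/-- All finite weighted limits exist (in the strong sense). -/
def HasFiniteWeightedLimitsP (C : Type u) [Category.{v} C] [PosEnriched C] : Prop :=
  ∀ (D : Type) [SmallCategory D] [PosEnriched D] (W : PosWeight D) (F : PosFunctor D C),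
    W.IsFiniteWeight → ∃ (L : C) (c : Cylinder W F L), IsWeightedLimitP W F L c

open PosEnr

/-- A regular `Pos`-enriched category. -/
def IsRegularCat (C : Type u) [Category.{v} C] [PosEnriched C] : Prop :=
  HasFiniteWeightedLimitsP C ∧
  (∀ {X Y : C} (f : X ⟶ Y), ∃ (I : C) (e : X ⟶ I) (m : I ⟶ Y),
      IsSo e ∧ OrderMono m ∧ e ≫ m = f) ∧
  (∀ {X Y Z P : C} (f : X ⟶ Z) (g : Y ⟶ Z) (p0 : P ⟶ X) (p1 : P ⟶ Y),
      IsPullbackP f g p0 p1 → IsSo f → IsSo p1)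

/-- An exact `Pos`-enriched category: regular, and every congruence is effective,
i.e. is the kernel congruence (comma object `q/q`) of some morphism. -/
def IsExactCat (C : Type u) [Category.{v} C] [PosEnriched C] : Prop :=
  IsRegularCat C ∧
  ∀ {S X : C} (s0 s1 : S ⟶ X), IsCongPair s0 s1 →
    ∃ (Q : C) (q : X ⟶ Q), IsCommaP q q s0 s1

/-- Fully order-faithful: full and order-reflecting (hence faithful) on hom-posets. -/
def FullyOrderFaithful {C : Type u} {E : Type u'} [Category.{v} C] [Category.{v'} E]
    [PosEnriched C] [PosEnriched E] (F : PosFunctor C E) : Prop :=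
  (∀ {X Y : C} (g : F.toFunctor.obj X ⟶ F.toFunctor.obj Y), ∃ f : X ⟶ Y, F.toFunctor.map f = g) ∧
  (∀ {X Y : C} (f g : X ⟶ Y), F.toFunctor.map f ≤ F.toFunctor.map g → f ≤ g)

/-- An equivalence of `Pos`-enriched categories. -/
def IsEquivP {C : Type u} {E : Type u'} [Category.{v} C] [Category.{v'} E]
    [PosEnriched C] [PosEnriched E] (F : PosFunctor C E) : Prop :=
  FullyOrderFaithful F ∧ ∀ Y : E, ∃ X : C, Nonempty (F.toFunctor.obj X ≅ Y)

/-- Preservation of all finite weighted limits by a `Pos`-enriched functor. -/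
def PreservesFiniteWeightedLimitsP {C : Type u} {E : Type u'} [Category.{v} C] [Category.{v'} E]
    [PosEnriched C] [PosEnriched E] (F : PosFunctor C E) : Prop :=
  ∀ (D : Type) [SmallCategory D] [PosEnriched D] (W : PosWeight D), W.IsFiniteWeight →
    ∀ (G : PosFunctor D C) (L : C) (c : Cylinder W G L),
      IsWeightedLimitP W G L c →
      IsWeightedLimitP W (G.comp F) (F.toFunctor.obj L) (c.mapF F)

/-- A regular `Pos`-enriched functor: preserves finite weighted limits and effective
epimorphisms. -/
def IsRegularFunctor {C : Type u} {E : Type u'} [Category.{v} C] [Category.{v'} E]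
    [PosEnriched C] [PosEnriched E] (F : PosFunctor C E) : Prop :=
  PreservesFiniteWeightedLimitsP F ∧
  ∀ {X Y : C} (e : X ⟶ Y), EffectiveEpiP e → EffectiveEpiP (F.toFunctor.map e)

/-- A left covering functor: for every weak finite weighted limit in the domain, any
comparison morphism into the corresponding (strong) limit in the codomain is an
effective epimorphism. -/
def LeftCovering {C : Type u} {E : Type u'} [Category.{v} C] [Category.{v'} E]
    [PosEnriched C] [PosEnriched E] (F : PosFunctor C E) : Prop :=
  ∀ (D : Type) [SmallCategory D] [PosEnriched D] (W : PosWeight D), W.IsFiniteWeight →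
    ∀ (G : PosFunctor D C) (L : C) (c : Cylinder W G L), IsWeakWeightedLimitP W G L c →
    ∀ (L' : E) (c' : Cylinder W (G.comp F) L'), IsWeightedLimitP W (G.comp F) L' c' →
    ∀ h : F.toFunctor.obj L ⟶ L', (∀ (d : D) (x : W.obj d),
        h ≫ c'.app d x = F.toFunctor.map (c.app d x)) →
      EffectiveEpiP h

/-- The full subcategory of a `Pos`-enriched category is `Pos`-enriched. -/
instance fullSubPosEnriched {C : Type u} [Category.{v} C] [PosEnriched C] (Z : C → Prop) :
    PosEnriched (ObjectProperty.FullSubcategory Z) where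
  homOrder X Y := @PartialOrder.lift _ _ (PosEnriched.homOrder X.obj Y.obj)
    (fun f : X ⟶ Y => f.hom) (fun _ _ h => ObjectProperty.hom_ext _ h)
  comp_mono h h' := PosEnriched.comp_mono h h'
/-! ## The exact completion -/

open PosEnr

/-- A pseudocongruence in a `Pos`-enriched category: an order-reflexive and transitive
parallel pair. These are the objects of the exact completion. -/
structure ExObj (C : Type u) [Category.{v} C] [PosEnriched C] where
  X : C
  R : C
  r0 : R ⟶ X
  r1 : R ⟶ X
  orefl : ∀ {A : C} (a0 a1 : A ⟶ X), a0 ≤ a1 → ∃ u : A ⟶ R, u ≫ r0 = a0 ∧ u ≫ r1 = a1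
  tra : ∀ {A : C} (u v : A ⟶ R), u ≫ r1 = v ≫ r0 →
    ∃ t : A ⟶ R, t ≫ r0 = u ≫ r0 ∧ t ≫ r1 = v ≫ r1

namespace ExObj

variable {C : Type u} [Category.{v} C] [PosEnriched C]

/-- `f : X ⟶ Y` is compatible from `(X,R)` to `(Y,S)`. -/
def Compat (A B : ExObj C) (f : A.X ⟶ B.X) : Prop :=
  ∃ fb : A.R ⟶ B.R, fb ≫ B.r0 = A.r0 ≫ f ∧ fb ≫ B.r1 = A.r1 ≫ f

/-- The preorder `f ≼ g` on compatible morphisms, given by factoring `(f,g)` through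
the codomain pseudocongruence. -/
def Pre (A B : ExObj C) (f g : A.X ⟶ B.X) : Prop :=
  ∃ s : A.X ⟶ B.R, s ≫ B.r0 = f ∧ s ≫ B.r1 = g

theorem Pre.refl (A B : ExObj C) (f : A.X ⟶ B.X) : Pre A B f f := by
  obtain ⟨u, h0, h1⟩ := B.orefl f f le_rfl
  exact ⟨u, h0, h1⟩

theorem Pre.trans' {A B : ExObj C} {f g h : A.X ⟶ B.X}
    (h1 : Pre A B f g) (h2 : Pre A B g h) : Pre A B f h := by
  obtain ⟨s, hs0, hs1⟩ := h1
  obtain ⟨t, ht0, ht1⟩ := h2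
  obtain ⟨w, hw0, hw1⟩ := B.tra s t (by rw [hs1, ht0])
  exact ⟨w, by rw [hw0, hs0], by rw [hw1, ht1]⟩

theorem Compat.comp {A B D : ExObj C} {f : A.X ⟶ B.X} {g : B.X ⟶ D.X}
    (hf : Compat A B f) (hg : Compat B D g) : Compat A D (f ≫ g) := by
  obtain ⟨fb, h0, h1⟩ := hf
  obtain ⟨gb, k0, k1⟩ := hg
  refine ⟨fb ≫ gb, ?_, ?_⟩
  · rw [Category.assoc, k0, ← Category.assoc, h0, Category.assoc]
  · rw [Category.assoc, k1, ← Category.assoc, h1, Category.assoc]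

theorem Pre.comp_left {A B D : ExObj C} {f f' : A.X ⟶ B.X} (g : B.X ⟶ D.X)
    (hg : Compat B D g) (h : Pre A B f f') : Pre A D (f ≫ g) (f' ≫ g) := by
  obtain ⟨s, hs0, hs1⟩ := h
  obtain ⟨gb, k0, k1⟩ := hg
  refine ⟨s ≫ gb, ?_, ?_⟩
  · rw [Category.assoc, k0, ← Category.assoc, hs0]
  · rw [Category.assoc, k1, ← Category.assoc, hs1]

theorem Pre.comp_right {A B D : ExObj C} (f : A.X ⟶ B.X) {g g' : B.X ⟶ D.X}
    (h : Pre B D g g') : Pre A D (f ≫ g) (f ≫ g') := by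
  obtain ⟨s, hs0, hs1⟩ := h
  exact ⟨f ≫ s, by rw [Category.assoc, hs0], by rw [Category.assoc, hs1]⟩

theorem Pre.compCongr {A B D : ExObj C} {f f' : A.X ⟶ B.X} {g g' : B.X ⟶ D.X}
    (hg : Compat B D g) (h1 : Pre A B f f') (h2 : Pre B D g g') :
    Pre A D (f ≫ g) (f' ≫ g') :=
  (Pre.comp_left g hg h1).trans' (Pre.comp_right f' h2)

/-- The equivalence relation on compatible morphisms. -/
def exSetoid (A B : ExObj C) : Setoid {f : A.X ⟶ B.X // Compat A B f} where
  r f g := Pre A B f.1 g.1 ∧ Pre A B g.1 f.1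
  iseqv := ⟨fun f => ⟨Pre.refl A B f.1, Pre.refl A B f.1⟩, fun h => ⟨h.2, h.1⟩,
    fun h1 h2 => ⟨h1.1.trans' h2.1, h2.2.trans' h1.2⟩⟩

/-- The exact completion `C_ex` as a category: objects are pseudocongruences, morphisms
are equivalence classes of compatible morphisms. -/
instance exCategory : Category (ExObj C) where
  Hom A B := Quotient (exSetoid A B)
  id A := Quotient.mk _ ⟨𝟙 A.X, ⟨𝟙 A.R, by simp, by simp⟩⟩
  comp {A B D} f g :=
    Quotient.liftOn₂ f g (fun f g => Quotient.mk _ ⟨f.1 ≫ g.1, f.2.comp g.2⟩)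
      (fun a b a' b' ha hb => Quotient.sound
        ⟨Pre.compCongr b.2 ha.1 hb.1, Pre.compCongr b'.2 ha.2 hb.2⟩)
  id_comp {A B} f := Quotient.inductionOn f fun f => Quotient.sound (by
    constructor <;> · simp only [Category.id_comp]; exact Pre.refl A B f.1)
  comp_id {A B} f := Quotient.inductionOn f fun f => Quotient.sound (by
    constructor <;> · simp only [Category.comp_id]; exact Pre.refl A B f.1)
  assoc {A B D E} f g h := Quotient.inductionOn₃ f g h fun f g h => Quotient.sound (by
    constructor <;> · simp only [Category.assoc]; exact Pre.refl A E _)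

/-- The `Pos`-enrichment of the exact completion. -/
instance exPosEnriched : PosEnriched (ExObj C) where
  homOrder A B :=
    { le := fun f g => Quotient.liftOn₂ f g (fun f g => Pre A B f.1 g.1)
        (fun a b a' b' ha hb => propext
          ⟨fun h => (ha.2.trans' h).trans' hb.1, fun h => (ha.1.trans' h).trans' hb.2⟩)
      le_refl := fun f => Quotient.inductionOn f fun f => Pre.refl A B f.1
      le_trans := fun f g h => Quotient.inductionOn₃ f g h
        (fun f g h h1 h2 => Pre.trans' h1 h2)
      le_antisymm := fun f g => Quotient.inductionOn₂ f g
        (fun f g h1 h2 => Quotient.sound ⟨h1, h2⟩) }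
  comp_mono {A B D} {f f'} {g g'} h h' := by
    revert h h'
    refine Quotient.inductionOn₂ f f' (fun a a' => Quotient.inductionOn₂ g g'
      (fun b b' h h' => ?_))
    exact Pre.compCongr b.2 h h'

end ExObj
/-! ## The canonical embedding `Γ : C → C_ex` -/

namespace ExObj

variable {C : Type u} [Category.{v} C] [PosEnriched C]

variable (I : C → C) (i0 i1 : ∀ X : C, I X ⟶ X)

/-- The pseudocongruence `(X, I_X)` associated to a chosen weak comma object `I_X` of
`(1_X, 1_X)`. -/
def commaExObj (hle : ∀ X, i0 X ≤ i1 X)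
    (hfac : ∀ (X : C) {A : C} (a0 a1 : A ⟶ X), a0 ≤ a1 →
      ∃ u : A ⟶ I X, u ≫ i0 X = a0 ∧ u ≫ i1 X = a1) (X : C) : ExObj C where
  X := X
  R := I X
  r0 := i0 X
  r1 := i1 X
  orefl a0 a1 h := hfac X a0 a1 h
  tra u v huv := by
    refine hfac X _ _ ?_
    calc u ≫ i0 X ≤ u ≫ i1 X := PosEnriched.comp_mono le_rfl (hle X)
      _ = v ≫ i0 X := huv
      _ ≤ v ≫ i1 X := PosEnriched.comp_mono le_rfl (hle X)

/-- The canonical functor `Γ : C → C_ex`, `X ↦ (X, I_X)`, `f ↦ [f]`. -/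
def GammaFunc (hle : ∀ X, i0 X ≤ i1 X)
    (hfac : ∀ (X : C) {A : C} (a0 a1 : A ⟶ X), a0 ≤ a1 →
      ∃ u : A ⟶ I X, u ≫ i0 X = a0 ∧ u ≫ i1 X = a1) : C ⥤ ExObj C where
  obj X := commaExObj I i0 i1 hle hfac X
  map {X Y} f := Quotient.mk _ ⟨f, by
    obtain ⟨u, h0, h1⟩ := hfac Y (i0 X ≫ f) (i1 X ≫ f)
      (PosEnriched.comp_mono (hle X) le_rfl)
    exact ⟨u, h0, h1⟩⟩
  map_id X := Quotient.sound (by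
    constructor <;> exact Pre.refl _ _ _)
  map_comp f g := Quotient.sound (by
    constructor <;> exact Pre.refl _ _ _)

/-- The canonical quotient morphism `[1_X] : Γ X → (X, R)` in `C_ex`. -/
def exQuot (hle : ∀ X, i0 X ≤ i1 X)
    (hfac : ∀ (X : C) {A : C} (a0 a1 : A ⟶ X), a0 ≤ a1 →
      ∃ u : A ⟶ I X, u ≫ i0 X = a0 ∧ u ≫ i1 X = a1) (A : ExObj C) :
    (GammaFunc I i0 i1 hle hfac).obj A.X ⟶ A :=
  Quotient.mk _ ⟨𝟙 A.X, by
    obtain ⟨u, h0, h1⟩ := A.orefl (i0 A.X) (i1 A.X) (hle A.X)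
    exact ⟨u, by simpa [GammaFunc, commaExObj] using h0, by simpa [GammaFunc, commaExObj] using h1⟩⟩

end ExObj
/-! ## Monads on `Pos` -/

open PosEnr

/-- A morphism of `PartOrd`, viewed as a monotone map. -/
def pHom {X Y : PartOrd} (f : X ⟶ Y) : ↥X →o ↥Y := f.hom

/-- `PartOrd` is `Pos`-enriched, with the pointwise order on monotone maps. -/
instance : PosEnriched PartOrd where
  homOrder X Y :=
    { le := fun f g => ∀ x : X, pHom f x ≤ pHom g x
      le_refl := fun f x => le_rfl
      le_trans := fun f g h h1 h2 x => (h1 x).trans (h2 x)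
      le_antisymm := fun f g h1 h2 =>
        PartOrd.Hom.ext (show pHom f = pHom g from OrderHom.ext _ _
          (funext fun x => le_antisymm (h1 x) (h2 x))) }
  comp_mono {X Y Z} {f f'} {g g'} h h' := fun x =>
    le_trans (h' (pHom f x)) ((pHom g').monotone (h x))

/-- The Eilenberg–Moore category of a monad on `PartOrd` is `Pos`-enriched, with the
pointwise order on underlying maps. -/
instance (T : CategoryTheory.Monad PartOrd) : PosEnriched T.Algebra where
  homOrder A B :=
    { le := fun f g => ∀ x : A.A, pHom f.f x ≤ pHom g.f x
      le_refl := fun f x => le_rfl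
      le_trans := fun f g h h1 h2 x => (h1 x).trans (h2 x)
      le_antisymm := fun f g h1 h2 =>
        CategoryTheory.Monad.Algebra.Hom.ext
          (PartOrd.Hom.ext (show pHom f.f = pHom g.f from OrderHom.ext _ _
            (funext fun x => le_antisymm (h1 x) (h2 x)))) }
  comp_mono {A B D} {f f'} {g g'} h h' := fun x =>
    le_trans (h' (pHom f.f x)) ((pHom g'.f).monotone (h x))

/-- A discrete poset: the order is equality. -/
def DiscretePoset (X : PartOrd) : Prop := ∀ a b : X, a ≤ b → a = b

/-!
A surjective algebra morphism `e` is an so-morphism: an order-monomorphism `m` of `Pos^T`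
reflects the order pointwise (test it against the comma object `m/m`), so a square from `e`
to `m` has a monotone diagonal, which is an algebra morphism because `T e` is again surjective.
Conversely an so-morphism factors through its image, a subalgebra since `T` preserves
surjections, hence is surjective. A morphism out of the free algebra on a discrete poset `X` is
an arbitrary function on `X`, which lifts pointwise along a surjection; so these free algebras
are so-projective, and the free algebra on the discrete carrier of `A` covers `A`.

A pseudocongruence `(X, R)` on such free algebras determines a preorder on the carrier of `X`
(the image of `R`, tested on points, i.e. on maps out of the free algebra on a point). The
comparison functor sends it to the quotient of `X` by this preorder, an algebra because `T`
preserves the coinserter of the corresponding congruence. Projectivity of `X` and `R` makes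
the functor full and order-faithful, and every algebra `C` is the image of the pseudocongruence
obtained by covering `C` and then covering the comma object of that cover.
-/

@[simp]
theorem pHom_eq_hom {X Y : PartOrd} (f : X ⟶ Y) : pHom f = ConcreteCategory.hom f := rfl

namespace PartOrd

noncomputable def descOfSurjective {A B X : PartOrd} (e : A ⟶ B) (he : Function.Surjective e)
    (f : A ⟶ X) (hf : ∀ a a', e a ≤ e a' → f a ≤ f a') : B ⟶ X :=
  ofHom ⟨fun b => f (he b).choose,
    fun b b' h => hf _ _ (by rwa [(he b).choose_spec, (he b').choose_spec])⟩

theorem comp_descOfSurjective {A B X : PartOrd} (e : A ⟶ B) (he : Function.Surjective e)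
    (f : A ⟶ X) (hf : ∀ a a', e a ≤ e a' → f a ≤ f a') : e ≫ descOfSurjective e he f hf = f := by
  ext a
  exact le_antisymm (hf _ _ (he _).choose_spec.le) (hf _ _ (he _).choose_spec.ge)

theorem isIso_of_surjective {X Y : PartOrd} (f : X ⟶ Y) (hf : Function.Surjective f)
    (hle : ∀ x x', f x ≤ f x' ↔ x ≤ x') : IsIso f :=
  (Iso.mk (OrderIso.ofSurjective (OrderEmbedding.ofMapLEIff f hle) hf)).isIso_hom

def discrete (α : Type u) : PartOrd.{u} :=
  @of α
    { le := Eq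
      le_refl := Eq.refl
      le_trans := fun _ _ _ => Eq.trans
      le_antisymm := fun _ _ h _ => h }

theorem discretePoset_discrete (α : Type u) : DiscretePoset (discrete α) := fun _ _ h => h

def homOfDiscrete {X Y : PartOrd} (hX : DiscretePoset X) (f : X → Y) : X ⟶ Y :=
  ofHom ⟨f, fun a b h => (hX a b h) ▸ le_rfl⟩

section QuotientByPreorder

variable {X : PartOrd.{u}} (R : X → X → Prop)

def graph : PartOrd.{u} := of {p : X × X // R p.1 p.2}

def graphFst : graph R ⟶ X := ofHom ⟨fun p => p.1.1, fun _ _ h => h.1⟩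

def graphSnd : graph R ⟶ X := ofHom ⟨fun p => p.1.2, fun _ _ h => h.2⟩

variable {R}

theorem isCongPair_graph (hle : ∀ x y : X, x ≤ y → R x y)
    (htrans : ∀ x y z : X, R x y → R y z → R x z) : IsCongPair (graphFst R) (graphSnd R) := by
  refine ⟨fun u v h₀ h₁ w => ⟨h₀ w, h₁ w⟩, fun a₀ a₁ h => ?_, fun u v huv => ?_⟩
  · refine ⟨ofHom ⟨fun w => ⟨(a₀ w, a₁ w), hle _ _ (h w)⟩,
      fun _ _ hw => ⟨a₀.hom.monotone hw, a₁.hom.monotone hw⟩⟩, rfl, rfl⟩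
  · have hmid : ∀ w, (u w).1.2 = (v w).1.1 := ConcreteCategory.congr_hom huv
    refine ⟨ofHom ⟨fun w => ⟨((u w).1.1, (v w).1.2),
      htrans _ _ _ (u w).2 ((hmid w).symm ▸ (v w).2)⟩,
      fun _ _ hw => ⟨(u.hom.monotone hw).1, (v.hom.monotone hw).2⟩⟩, rfl, rfl⟩

variable (hle : ∀ x y : X, x ≤ y → R x y) (htrans : ∀ x y z : X, R x y → R y z → R x z)

def preorderSetoid : Setoid X where
  r x y := R x y ∧ R y x
  iseqv := ⟨fun x => ⟨hle x x le_rfl, hle x x le_rfl⟩, fun h => ⟨h.2, h.1⟩,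
    fun h₁ h₂ => ⟨htrans _ _ _ h₁.1 h₂.1, htrans _ _ _ h₂.2 h₁.2⟩⟩

/-- A type synonym, so that the order below is not confused with `Quotient.instPreorder`. -/
def QuotientByPreorder : Type u := Quotient (preorderSetoid hle htrans)

def quotientLE (ξ ζ : QuotientByPreorder hle htrans) : Prop :=
  Quotient.liftOn₂ ξ ζ R fun _ _ _ _ ha hb => propext
    ⟨fun h => htrans _ _ _ (htrans _ _ _ ha.2 h) hb.1,
      fun h => htrans _ _ _ (htrans _ _ _ ha.1 h) hb.2⟩

instance : PartialOrder (QuotientByPreorder hle htrans) where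
  le := quotientLE hle htrans
  le_refl ξ := Quotient.inductionOn ξ fun x => hle x x le_rfl
  le_trans ξ ζ χ := Quotient.inductionOn₃ ξ ζ χ fun _ _ _ => htrans _ _ _
  le_antisymm ξ ζ := Quotient.inductionOn₂ ξ ζ fun _ _ h₁ h₂ => Quotient.sound ⟨h₁, h₂⟩

def quotMk : X ⟶ of (QuotientByPreorder hle htrans) :=
  ofHom ⟨Quotient.mk _, fun x y h => hle x y h⟩

theorem quotMk_surjective : Function.Surjective (quotMk hle htrans) :=
  Quotient.mk_surjective

theorem isCoinserter_quotMk : IsCoinserterP (graphFst R) (graphSnd R) (quotMk hle htrans) := by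
  refine ⟨fun p => p.2, fun h hh => ?_, fun h h' hh ξ => ?_⟩
  · exact ⟨descOfSurjective _ (quotMk_surjective hle htrans) h fun x y hxy => hh ⟨(x, y), hxy⟩,
      comp_descOfSurjective _ _ _ _⟩
  · obtain ⟨x, rfl⟩ := quotMk_surjective hle htrans ξ
    exact hh x

end QuotientByPreorder

end PartOrd

theorem PosEnr.SoProjective.of_iso {C : Type*} [Category C] [PosEnriched C] {P Q : C}
    (i : P ≅ Q) (hP : SoProjective P) : SoProjective Q := by
  intro A B e he f
  obtain ⟨g, hg⟩ := hP e he (i.hom ≫ f)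
  exact ⟨i.inv ≫ g, by rw [Category.assoc, hg, Iso.inv_hom_id_assoc]⟩

namespace CategoryTheory.Monad.Algebra

variable {C : Type*} [Category C] {T : Monad C}

def ofJointlyMono {B₀ B₁ : T.Algebra} {P : C} (m₀ : P ⟶ B₀.A) (m₁ : P ⟶ B₁.A)
    (hm : ∀ {Z : C} (f g : Z ⟶ P), f ≫ m₀ = g ≫ m₀ → f ≫ m₁ = g ≫ m₁ → f = g)
    (a : T.obj P ⟶ P) (ha₀ : a ≫ m₀ = T.map m₀ ≫ B₀.a) (ha₁ : a ≫ m₁ = T.map m₁ ≫ B₁.a) :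
    T.Algebra where
  A := P
  a := a
  unit := hm _ _
    (by rw [Category.assoc, ha₀, ← Monad.unit_naturality_assoc _ T m₀, B₀.unit, Category.comp_id]
        exact (Category.id_comp m₀).symm)
    (by rw [Category.assoc, ha₁, ← Monad.unit_naturality_assoc _ T m₁, B₁.unit, Category.comp_id]
        exact (Category.id_comp m₁).symm)
  assoc := hm _ _
    (by simp only [Category.assoc, ha₀]
        rw [← Monad.mu_naturality_assoc _ T, B₀.assoc, ← Functor.map_comp_assoc,
          ← Functor.map_comp_assoc, ha₀])
    (by simp only [Category.assoc, ha₁]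
        rw [← Monad.mu_naturality_assoc _ T, B₁.assoc, ← Functor.map_comp_assoc,
          ← Functor.map_comp_assoc, ha₁])

def homOfJointlyMono {A B₀ B₁ D : T.Algebra} (m₀ : D ⟶ B₀) (m₁ : D ⟶ B₁)
    (hm : ∀ {Z : C} (f g : Z ⟶ D.A), f ≫ m₀.f = g ≫ m₀.f → f ≫ m₁.f = g ≫ m₁.f → f = g)
    (f₀ : A ⟶ B₀) (f₁ : A ⟶ B₁) (g : A.A ⟶ D.A) (hg₀ : g ≫ m₀.f = f₀.f)
    (hg₁ : g ≫ m₁.f = f₁.f) : A ⟶ D where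
  f := g
  h := hm _ _
    (by rw [Category.assoc, ← m₀.h, ← Functor.map_comp_assoc, hg₀, f₀.h, Category.assoc, hg₀])
    (by rw [Category.assoc, ← m₁.h, ← Functor.map_comp_assoc, hg₁, f₁.h, Category.assoc, hg₁])

def homOfEpi {A B D : T.Algebra} (e : A ⟶ B) [Epi (T.map e.f)] (f : A ⟶ D) (g : B.A ⟶ D.A)
    (hg : e.f ≫ g = f.f) : B ⟶ D where
  f := g
  h := by
    rw [← cancel_epi (T.map e.f), ← Functor.map_comp_assoc, hg, f.h, ← hg, e.h_assoc]

def ofEpi (B : T.Algebra) {P : C} (e : B.A ⟶ P) [Epi e] [Epi (T.map (T.map e))]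
    (b : T.obj P ⟶ P) (hb : T.map e ≫ b = B.a ≫ e) : T.Algebra where
  A := P
  a := b
  unit := by
    rw [← cancel_epi e, Monad.unit_naturality_assoc _ T, hb, B.unit_assoc, Category.comp_id]
  assoc := by
    rw [← cancel_epi (T.map (T.map e)), Monad.mu_naturality_assoc _ T, hb, B.assoc_assoc,
      ← Functor.map_comp_assoc, hb, Functor.map_comp_assoc, hb]

end CategoryTheory.Monad.Algebra

namespace CategoryTheory.Monad

def LocallyMonotone (T : Monad PartOrd) : Prop :=
  ∀ {X Y : PartOrd} (f g : X ⟶ Y), f ≤ g → T.map f ≤ T.map g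

def PreservesSurjections (T : Monad PartOrd) : Prop :=
  ∀ {X Y : PartOrd} (f : X ⟶ Y), Function.Surjective f → Function.Surjective (T.map f)

def PreservesCongruenceCoinserters (T : Monad PartOrd) : Prop :=
  ∀ {S X Q : PartOrd} (s₀ s₁ : S ⟶ X) (q : X ⟶ Q), IsCongPair s₀ s₁ →
    IsCoinserterP s₀ s₁ q → IsCoinserterP (T.map s₀) (T.map s₁) (T.map q)

end CategoryTheory.Monad

namespace CategoryTheory.Monad.Algebra

variable {T : Monad PartOrd.{u}}

theorem Hom.f_a_apply {A B : T.Algebra} (f : A ⟶ B) (t : T.obj A.A) :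
    f.f (A.a t) = B.a (T.map f.f t) :=
  (ConcreteCategory.congr_hom f.h t).symm

theorem Hom.congr_f_apply {A B : T.Algebra} {f g : A ⟶ B} (h : f = g) (x : A.A) :
    f.f x = g.f x :=
  ConcreteCategory.congr_hom (congrArg Hom.f h) x

noncomputable def descOfSurjective (hS : T.PreservesSurjections) {A B D : T.Algebra} (e : A ⟶ B)
    (he : Function.Surjective e.f) (f : A ⟶ D) (hf : ∀ a a', e.f a ≤ e.f a' → f.f a ≤ f.f a') :
    B ⟶ D :=
  haveI := ConcreteCategory.epi_of_surjective _ (hS e.f he)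
  homOfEpi e f (PartOrd.descOfSurjective e.f he f.f hf) (PartOrd.comp_descOfSurjective _ _ _ hf)

theorem comp_descOfSurjective (hS : T.PreservesSurjections) {A B D : T.Algebra} (e : A ⟶ B)
    (he : Function.Surjective e.f) (f : A ⟶ D) (hf : ∀ a a', e.f a ≤ e.f a' → f.f a ≤ f.f a') :
    e ≫ descOfSurjective hS e he f hf = f :=
  Hom.ext (PartOrd.comp_descOfSurjective _ _ _ hf)

section Comma

variable {X Z : T.Algebra} (m : X ⟶ Z)

def commaPoset : PartOrd.{u} := PartOrd.of {p : X.A × X.A // m.f p.1 ≤ m.f p.2}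

def commaFst : commaPoset m ⟶ X.A := PartOrd.ofHom ⟨fun p => p.1.1, fun _ _ h => h.1⟩

def commaSnd : commaPoset m ⟶ X.A := PartOrd.ofHom ⟨fun p => p.1.2, fun _ _ h => h.2⟩

theorem commaPoset_hom_ext {W : PartOrd.{u}} (f g : W ⟶ commaPoset m)
    (h₀ : f ≫ commaFst m = g ≫ commaFst m) (h₁ : f ≫ commaSnd m = g ≫ commaSnd m) : f = g := by
  ext w
  exact Subtype.ext (Prod.ext (ConcreteCategory.congr_hom h₀ w) (ConcreteCategory.congr_hom h₁ w))

def commaStr (hT : T.LocallyMonotone) : T.obj (commaPoset m) ⟶ commaPoset m :=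
  PartOrd.ofHom
    { toFun := fun t => ⟨(X.a (T.map (commaFst m) t), X.a (T.map (commaSnd m) t)), by
        have hle : commaFst m ≫ m.f ≤ commaSnd m ≫ m.f := fun p => p.2
        rw [Hom.f_a_apply, Hom.f_a_apply]
        exact Z.a.hom.monotone (by simpa using hT _ _ hle t)⟩
      monotone' := fun _ _ h => ⟨(X.a.hom.comp (T.map (commaFst m)).hom).monotone h,
        (X.a.hom.comp (T.map (commaSnd m)).hom).monotone h⟩ }

def commaAlg (hT : T.LocallyMonotone) : T.Algebra :=
  ofJointlyMono (B₀ := X) (B₁ := X) (commaFst m) (commaSnd m) (commaPoset_hom_ext m)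
    (commaStr m hT) rfl rfl

def commaAlg.fst (hT : T.LocallyMonotone) : commaAlg m hT ⟶ X := ⟨commaFst m, rfl⟩

def commaAlg.snd (hT : T.LocallyMonotone) : commaAlg m hT ⟶ X := ⟨commaSnd m, rfl⟩

def commaAlg.lift (hT : T.LocallyMonotone) {W : T.Algebra} (u v : W ⟶ X) (huv : u ≫ m ≤ v ≫ m) :
    W ⟶ commaAlg m hT :=
  homOfJointlyMono (commaAlg.fst m hT) (commaAlg.snd m hT) (commaPoset_hom_ext m) u v
    (PartOrd.ofHom ⟨fun w => ⟨(u.f w, v.f w), huv w⟩,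
      fun _ _ h => ⟨u.f.hom.monotone h, v.f.hom.monotone h⟩⟩) rfl rfl

theorem commaAlg.lift_fst (hT : T.LocallyMonotone) {W : T.Algebra} (u v : W ⟶ X)
    (huv : u ≫ m ≤ v ≫ m) :
    commaAlg.lift m hT u v huv ≫ commaAlg.fst m hT = u := rfl

theorem commaAlg.lift_snd (hT : T.LocallyMonotone) {W : T.Algebra} (u v : W ⟶ X)
    (huv : u ≫ m ≤ v ≫ m) :
    commaAlg.lift m hT u v huv ≫ commaAlg.snd m hT = v := rfl

end Comma

theorem le_of_orderMono (hT : T.LocallyMonotone) {X Z : T.Algebra} {m : X ⟶ Z}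
    (hm : OrderMono m) {x x' : X.A} (h : m.f x ≤ m.f x') : x ≤ x' :=
  hm (commaAlg.fst m hT) (commaAlg.snd m hT) (fun p => p.2) ⟨(x, x'), h⟩

theorem isSo_of_surjective (hT : T.LocallyMonotone) (hS : T.PreservesSurjections)
    {A B : T.Algebra} (e : A ⟶ B) (he : Function.Surjective e.f) : IsSo e := by
  intro X Y m hm
  refine ⟨fun f g hfg => ?_, fun h h' hle _ b => ?_⟩
  · have hfg' : ∀ a, m.f (f.f a) = g.f (e.f a) := Hom.congr_f_apply hfg
    have hf : ∀ a a', e.f a ≤ e.f a' → f.f a ≤ f.f a' := fun a a' h =>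
      le_of_orderMono hT hm (by rw [hfg', hfg']; exact g.f.hom.monotone h)
    refine ⟨descOfSurjective hS e he f hf, comp_descOfSurjective hS e he f hf, ?_⟩
    have : Epi e.f := ConcreteCategory.epi_of_surjective _ he
    have := Monad.algebra_epi_of_epi T e
    rw [← cancel_epi e, ← Category.assoc, comp_descOfSurjective, hfg]
  · obtain ⟨a, rfl⟩ := he b
    exact hle a

section Image

variable {A B : T.Algebra} (e : A ⟶ B)

def imagePoset : PartOrd.{u} := PartOrd.of (Set.range e.f)

def imageι : imagePoset e ⟶ B.A := PartOrd.ofHom ⟨Subtype.val, fun _ _ h => h⟩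

def imageCorestr : A.A ⟶ imagePoset e :=
  PartOrd.ofHom ⟨fun a => ⟨e.f a, a, rfl⟩, fun _ _ h => e.f.hom.monotone h⟩

theorem imageCorestr_surjective : Function.Surjective (imageCorestr e) := by
  rintro ⟨b, a, rfl⟩
  exact ⟨a, rfl⟩

theorem imageι_cancel {W : PartOrd.{u}} (f g : W ⟶ imagePoset e) (h : f ≫ imageι e = g ≫ imageι e) :
    f = g := by
  ext w
  exact Subtype.ext (ConcreteCategory.congr_hom h w)

/-- The range of `e` is closed under the structure map of `B` because `T` preserves the
surjection of `A` onto it. -/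
def imageAlg (hS : T.PreservesSurjections) : T.Algebra :=
  ofJointlyMono (B₀ := B) (B₁ := B) (imageι e) (imageι e) (fun f g h _ => imageι_cancel e f g h)
    (PartOrd.ofHom
      { toFun := fun t => ⟨B.a (T.map (imageι e) t), by
          obtain ⟨s, rfl⟩ := hS _ (imageCorestr_surjective e) t
          exact ⟨A.a s, (Hom.f_a_apply e s).trans
            (congrArg B.a (ConcreteCategory.congr_hom (T.map_comp (imageCorestr e) (imageι e)) s))⟩⟩
        monotone' := fun _ _ h => (B.a.hom.comp (T.map (imageι e)).hom).monotone h })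
    rfl rfl

def imageAlg.ι (hS : T.PreservesSurjections) : imageAlg e hS ⟶ B := ⟨imageι e, rfl⟩

def imageAlg.corestr (hS : T.PreservesSurjections) : A ⟶ imageAlg e hS :=
  homOfJointlyMono (imageAlg.ι e hS) (imageAlg.ι e hS) (fun f g h _ => imageι_cancel e f g h) e e
    (imageCorestr e) rfl rfl

end Image

theorem surjective_of_isSo (hS : T.PreservesSurjections) {A B : T.Algebra} (e : A ⟶ B)
    (he : IsSo e) : Function.Surjective e.f := by
  have hι : OrderMono (imageAlg.ι e hS) := fun _ _ h z => h z
  obtain ⟨h, -, hh⟩ := (he (imageAlg.ι e hS) hι).1 (imageAlg.corestr e hS) (𝟙 B) rfl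
  intro b
  obtain ⟨a, ha⟩ := (h.f b).2
  exact ⟨a, ha.trans (Hom.congr_f_apply hh b)⟩

end CategoryTheory.Monad.Algebra

namespace CategoryTheory.Monad

variable {T : Monad PartOrd.{u}}

theorem adj_homEquiv_symm_apply_η {X : PartOrd.{u}} {A : T.Algebra} (g : X ⟶ A.A) (x : X) :
    ((T.adj.homEquiv X A).symm g).f (T.η.app X x) = g x :=
  ConcreteCategory.congr_hom ((T.adj.homEquiv X A).apply_symm_apply g) x

theorem adj_homEquiv_symm_f {X : PartOrd.{u}} {A : T.Algebra} (g : X ⟶ T.forget.obj A) :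
    ((T.adj.homEquiv X A).symm g).f = T.map g ≫ A.a := by
  rw [Adjunction.homEquiv_counit, Monad.adj_counit]
  rfl

theorem adj_homEquiv_symm_mono (hT : T.LocallyMonotone) {X : PartOrd.{u}} {A : T.Algebra}
    {g g' : X ⟶ T.forget.obj A} (h : g ≤ g') :
    (T.adj.homEquiv X A).symm g ≤ (T.adj.homEquiv X A).symm g' := by
  intro t
  rw [adj_homEquiv_symm_f, adj_homEquiv_symm_f]
  exact A.a.hom.monotone (hT g g' h t)

theorem soProjective_free (hS : T.PreservesSurjections) {X : PartOrd.{u}}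
    (hX : DiscretePoset X) : SoProjective (T.free.obj X) := by
  intro A B e he f
  have he' := Algebra.surjective_of_isSo hS e he
  refine ⟨(T.adj.homEquiv X A).symm
    (PartOrd.homOfDiscrete hX fun x => (he' (f.f (T.η.app X x))).choose), ?_⟩
  apply (T.adj.homEquiv X B).injective
  rw [Adjunction.homEquiv_naturality_right, Equiv.apply_symm_apply]
  ext x
  exact (he' _).choose_spec

abbrev IsFreeOnDiscrete (T : Monad PartOrd.{u}) (A : T.Algebra) : Prop :=
  ∃ X : PartOrd.{u}, DiscretePoset X ∧ Nonempty (A ≅ T.free.obj X)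

theorem soProjective_of_isFreeOnDiscrete (hS : T.PreservesSurjections) {A : T.Algebra}
    (hA : T.IsFreeOnDiscrete A) : SoProjective A := by
  obtain ⟨X, hX, ⟨i⟩⟩ := hA
  exact SoProjective.of_iso i.symm (soProjective_free hS hX)

def freeDiscrete (T : Monad PartOrd.{u}) (α : Type u) :
    ObjectProperty.FullSubcategory T.IsFreeOnDiscrete :=
  ⟨T.free.obj (PartOrd.discrete α), _, PartOrd.discretePoset_discrete α, ⟨Iso.refl _⟩⟩

noncomputable def cover (A : T.Algebra) : T.free.obj (PartOrd.discrete A.A) ⟶ A :=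
  (T.adj.homEquiv _ A).symm (PartOrd.homOfDiscrete (PartOrd.discretePoset_discrete _) fun x => x)

theorem cover_surjective (A : T.Algebra) : Function.Surjective (cover A).f :=
  fun x => ⟨T.η.app _ x, adj_homEquiv_symm_apply_η (X := PartOrd.discrete A.A) _ x⟩

def point {A : T.Algebra} (x : A.A) : T.free.obj (PartOrd.discrete PUnit) ⟶ A :=
  (T.adj.homEquiv _ A).symm (PartOrd.homOfDiscrete (PartOrd.discretePoset_discrete _) fun _ => x)

theorem point_apply_η {A : T.Algebra} (x : A.A) :
    (point x).f (T.η.app _ PUnit.unit) = x :=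
  adj_homEquiv_symm_apply_η _ _

theorem point_comp {A B : T.Algebra} (x : A.A) (g : A ⟶ B) : point x ≫ g = point (g.f x) := by
  rw [point, ← Adjunction.homEquiv_naturality_right_symm]
  rfl

theorem point_mono (hT : T.LocallyMonotone) {A : T.Algebra} {x y : A.A} (h : x ≤ y) :
    point (T := T) x ≤ point y :=
  adj_homEquiv_symm_mono hT fun _ => h

abbrev FreeOnDiscrete (T : Monad PartOrd.{u}) := ObjectProperty.FullSubcategory T.IsFreeOnDiscrete

theorem FreeOnDiscrete.congr_hom_f_apply {A B : T.FreeOnDiscrete} {f g : A ⟶ B} (h : f = g)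
    (x : A.obj.A) : f.hom.f x = g.hom.f x :=
  Algebra.Hom.congr_f_apply (congrArg InducedCategory.Hom.hom h) x

theorem exists_lift_comma (hT : T.LocallyMonotone) (hS : T.PreservesSurjections)
    {W R X Z : T.Algebra} (hW : SoProjective W) (e : X ⟶ Z) (p : R ⟶ Algebra.commaAlg e hT)
    (hp : Function.Surjective p.f) (u v : W ⟶ X) (huv : u ≫ e ≤ v ≫ e) :
    ∃ w : W ⟶ R, w ≫ p ≫ Algebra.commaAlg.fst e hT = u ∧ w ≫ p ≫ Algebra.commaAlg.snd e hT = v := by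
  obtain ⟨w, hw⟩ :=
    hW p (Algebra.isSo_of_surjective hT hS p hp) (Algebra.commaAlg.lift e hT u v huv)
  exact ⟨w, by rw [← Category.assoc, hw, Algebra.commaAlg.lift_fst],
    by rw [← Category.assoc, hw, Algebra.commaAlg.lift_snd]⟩

end CategoryTheory.Monad

namespace ExObj

open Monad

variable {T : Monad PartOrd.{u}}

section Relation

variable (P : ExObj T.FreeOnDiscrete)

def Rel (x y : P.X.obj.A) : Prop := ∃ ρ : P.R.obj.A, P.r0.hom.f ρ = x ∧ P.r1.hom.f ρ = y

variable {P}

theorem rel_of_le (hT : T.LocallyMonotone) {x y : P.X.obj.A} (h : x ≤ y) : P.Rel x y := by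
  obtain ⟨u, h₀, h₁⟩ := P.orefl (A := T.freeDiscrete PUnit) (ObjectProperty.homMk (point x))
    (ObjectProperty.homMk (point y)) (point_mono hT h)
  refine ⟨u.hom.f (T.η.app _ PUnit.unit), ?_, ?_⟩
  · exact (FreeOnDiscrete.congr_hom_f_apply h₀ _).trans (point_apply_η x)
  · exact (FreeOnDiscrete.congr_hom_f_apply h₁ _).trans (point_apply_η y)

theorem rel_trans {x y z : P.X.obj.A} (hxy : P.Rel x y) (hyz : P.Rel y z) : P.Rel x z := by
  obtain ⟨ρ, rfl, rfl⟩ := hxy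
  obtain ⟨σ, hσ, rfl⟩ := hyz
  have hcond : point ρ ≫ P.r1.hom = point σ ≫ P.r0.hom := by rw [point_comp, point_comp, hσ]
  obtain ⟨t, h₀, h₁⟩ := P.tra (A := T.freeDiscrete PUnit) (ObjectProperty.homMk (point ρ))
    (ObjectProperty.homMk (point σ)) (ObjectProperty.hom_ext _ hcond)
  have e₀ : t.hom ≫ P.r0.hom = point (P.r0.hom.f ρ) :=
    (congrArg InducedCategory.Hom.hom h₀).trans (point_comp ρ P.r0.hom)
  have e₁ : t.hom ≫ P.r1.hom = point (P.r1.hom.f σ) :=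
    (congrArg InducedCategory.Hom.hom h₁).trans (point_comp σ P.r1.hom)
  exact ⟨t.hom.f (T.η.app _ PUnit.unit), (Algebra.Hom.congr_f_apply e₀ _).trans (point_apply_η _),
    (Algebra.Hom.congr_f_apply e₁ _).trans (point_apply_η _)⟩

end Relation

section Quotient

variable (hT : T.LocallyMonotone) (P : ExObj T.FreeOnDiscrete)

def quotient : PartOrd.{u} :=
  PartOrd.of (PartOrd.QuotientByPreorder (R := P.Rel) (fun _ _ => rel_of_le hT)
    fun _ _ _ => rel_trans)

def quotMk : P.X.obj.A ⟶ P.quotient hT := PartOrd.quotMk _ _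

theorem quotMk_le_quotMk_iff {x y : P.X.obj.A} : P.quotMk hT x ≤ P.quotMk hT y ↔ P.Rel x y :=
  Iff.rfl

theorem quotMk_surjective : Function.Surjective (P.quotMk hT) := PartOrd.quotMk_surjective _ _

/-- `T q` is the coinserter of `T` applied to the congruence `P.Rel`; the required inequality
is checked on the image of the surjection `T R → T (graph P.Rel)`, where it comes from the
structure map of `R`. -/
theorem exists_quotient_structure (hS : T.PreservesSurjections)
    (hC : T.PreservesCongruenceCoinserters) :
    ∃ b : T.obj (P.quotient hT) ⟶ P.quotient hT,
      T.map (P.quotMk hT) ≫ b = P.X.obj.a ≫ P.quotMk hT := by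
  have hcoin := hC _ _ _ (PartOrd.isCongPair_graph (fun _ _ => rel_of_le hT) fun _ _ _ => rel_trans)
    (PartOrd.isCoinserter_quotMk (R := P.Rel) (fun _ _ => rel_of_le hT) fun _ _ _ => rel_trans)
  refine hcoin.2.1 _ fun t => ?_
  let φ : P.R.obj.A ⟶ PartOrd.graph P.Rel := PartOrd.ofHom
    ⟨fun ρ => ⟨(P.r0.hom.f ρ, P.r1.hom.f ρ), ρ, rfl, rfl⟩,
      fun _ _ h => ⟨P.r0.hom.f.hom.monotone h, P.r1.hom.f.hom.monotone h⟩⟩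
  obtain ⟨s, rfl⟩ := hS φ (fun ⟨_, ρ, h₀, h₁⟩ => ⟨ρ, Subtype.ext (Prod.ext h₀ h₁)⟩) t
  have h₀ : T.map (PartOrd.graphFst P.Rel) (T.map φ s) = T.map P.r0.hom.f s :=
    (ConcreteCategory.congr_hom (T.map_comp φ (PartOrd.graphFst P.Rel)) s).symm
  have h₁ : T.map (PartOrd.graphSnd P.Rel) (T.map φ s) = T.map P.r1.hom.f s :=
    (ConcreteCategory.congr_hom (T.map_comp φ (PartOrd.graphSnd P.Rel)) s).symm
  change P.quotMk hT (P.X.obj.a (T.map (PartOrd.graphFst P.Rel) (T.map φ s))) ≤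
    P.quotMk hT (P.X.obj.a (T.map (PartOrd.graphSnd P.Rel) (T.map φ s)))
  rw [h₀, h₁, ← Algebra.Hom.f_a_apply, ← Algebra.Hom.f_a_apply]
  exact ⟨P.R.obj.a s, rfl, rfl⟩

variable (hS : T.PreservesSurjections) (hC : T.PreservesCongruenceCoinserters)

noncomputable def quotientAlg : T.Algebra :=
  haveI := ConcreteCategory.epi_of_surjective _ (P.quotMk_surjective hT)
  haveI := ConcreteCategory.epi_of_surjective _ (hS _ (hS _ (P.quotMk_surjective hT)))
  Algebra.ofEpi P.X.obj (P.quotMk hT) (P.exists_quotient_structure hT hS hC).choose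
    (P.exists_quotient_structure hT hS hC).choose_spec

noncomputable def quotientAlgMk : P.X.obj ⟶ P.quotientAlg hT hS hC :=
  ⟨P.quotMk hT, (P.exists_quotient_structure hT hS hC).choose_spec⟩

theorem quotientAlg_hom_ext {D : T.Algebra} {g g' : P.quotientAlg hT hS hC ⟶ D}
    (h : P.quotientAlgMk hT hS hC ≫ g = P.quotientAlgMk hT hS hC ≫ g') : g = g' := by
  ext ξ
  obtain ⟨x, rfl⟩ := P.quotMk_surjective hT ξ
  exact Algebra.Hom.congr_f_apply h x

noncomputable def relCover : P.R.obj ⟶ Algebra.commaAlg (P.quotientAlgMk hT hS hC) hT :=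
  Algebra.commaAlg.lift _ hT P.r0.hom P.r1.hom fun ρ => ⟨ρ, rfl, rfl⟩

theorem relCover_surjective : Function.Surjective (P.relCover hT hS hC).f := by
  rintro ⟨⟨x, y⟩, ρ, h₀, h₁⟩
  exact ⟨ρ, Subtype.ext (Prod.ext h₀ h₁)⟩

end Quotient

variable {P Q : ExObj T.FreeOnDiscrete}

theorem Compat.map_rel {f : P.X ⟶ Q.X} (hf : Compat P Q f) {x y : P.X.obj.A} (h : P.Rel x y) :
    Q.Rel (f.hom.f x) (f.hom.f y) := by
  obtain ⟨fb, h₀, h₁⟩ := hf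
  obtain ⟨ρ, rfl, rfl⟩ := h
  exact ⟨fb.hom.f ρ, FreeOnDiscrete.congr_hom_f_apply h₀ ρ, FreeOnDiscrete.congr_hom_f_apply h₁ ρ⟩

theorem Pre.rel {f g : P.X ⟶ Q.X} (h : Pre P Q f g) (x : P.X.obj.A) :
    Q.Rel (f.hom.f x) (g.hom.f x) := by
  obtain ⟨s, h₀, h₁⟩ := h
  exact ⟨s.hom.f x, FreeOnDiscrete.congr_hom_f_apply h₀ x, FreeOnDiscrete.congr_hom_f_apply h₁ x⟩

theorem exists_lift_rel (hT : T.LocallyMonotone) (hS : T.PreservesSurjections)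
    (hC : T.PreservesCongruenceCoinserters) {W : T.FreeOnDiscrete} (u v : W ⟶ Q.X)
    (h : ∀ w, Q.Rel (u.hom.f w) (v.hom.f w)) : ∃ s : W ⟶ Q.R, s ≫ Q.r0 = u ∧ s ≫ Q.r1 = v := by
  obtain ⟨s, h₀, h₁⟩ := exists_lift_comma hT hS (soProjective_of_isFreeOnDiscrete hS W.2)
    (Q.quotientAlgMk hT hS hC) (Q.relCover hT hS hC) (Q.relCover_surjective hT hS hC)
    u.hom v.hom h
  exact ⟨ObjectProperty.homMk s, ObjectProperty.hom_ext _ h₀, ObjectProperty.hom_ext _ h₁⟩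

theorem compat_of_map_rel (hT : T.LocallyMonotone) (hS : T.PreservesSurjections)
    (hC : T.PreservesCongruenceCoinserters) {f : P.X ⟶ Q.X}
    (h : ∀ x y, P.Rel x y → Q.Rel (f.hom.f x) (f.hom.f y)) : Compat P Q f :=
  exists_lift_rel hT hS hC (P.r0 ≫ f) (P.r1 ≫ f) fun ρ => h _ _ ⟨ρ, rfl, rfl⟩

theorem pre_of_rel (hT : T.LocallyMonotone) (hS : T.PreservesSurjections)
    (hC : T.PreservesCongruenceCoinserters) {f g : P.X ⟶ Q.X}
    (h : ∀ x, Q.Rel (f.hom.f x) (g.hom.f x)) : Pre P Q f g :=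
  exists_lift_rel hT hS hC f g h

section Comparison

variable (hT : T.LocallyMonotone) (hS : T.PreservesSurjections)
  (hC : T.PreservesCongruenceCoinserters)

noncomputable def quotientMap (f : P.X ⟶ Q.X) (hf : Compat P Q f) :
    P.quotientAlg hT hS hC ⟶ Q.quotientAlg hT hS hC :=
  Algebra.descOfSurjective hS (P.quotientAlgMk hT hS hC) (P.quotMk_surjective hT)
    (f.hom ≫ Q.quotientAlgMk hT hS hC) fun _ _ h => hf.map_rel h

theorem quotientAlgMk_comp_quotientMap (f : P.X ⟶ Q.X) (hf : Compat P Q f) :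
    P.quotientAlgMk hT hS hC ≫ quotientMap hT hS hC f hf = f.hom ≫ Q.quotientAlgMk hT hS hC :=
  Algebra.comp_descOfSurjective ..

theorem quotientMap_quotMk (f : P.X ⟶ Q.X) (hf : Compat P Q f) (x : P.X.obj.A) :
    (quotientMap hT hS hC f hf).f (P.quotMk hT x) = Q.quotMk hT (f.hom.f x) :=
  Algebra.Hom.congr_f_apply (quotientAlgMk_comp_quotientMap hT hS hC f hf) x

theorem quotientMap_le {f g : P.X ⟶ Q.X} (hf : Compat P Q f) (hg : Compat P Q g)
    (h : Pre P Q f g) : quotientMap hT hS hC f hf ≤ quotientMap hT hS hC g hg := by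
  intro ξ
  obtain ⟨x, rfl⟩ := P.quotMk_surjective hT ξ
  change (quotientMap hT hS hC f hf).f (P.quotMk hT x) ≤
    (quotientMap hT hS hC g hg).f (P.quotMk hT x)
  rw [quotientMap_quotMk, quotientMap_quotMk]
  exact h.rel x

theorem quotientMap_id (hP : Compat P P (𝟙 P.X)) :
    quotientMap hT hS hC (𝟙 P.X) hP = 𝟙 _ :=
  quotientAlg_hom_ext hT P hS hC (by rw [quotientAlgMk_comp_quotientMap]; rfl)

theorem quotientMap_comp {R : ExObj T.FreeOnDiscrete} {f : P.X ⟶ Q.X} {g : Q.X ⟶ R.X}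
    (hf : Compat P Q f) (hg : Compat Q R g) :
    quotientMap hT hS hC (f ≫ g) (hf.comp hg) =
      quotientMap hT hS hC f hf ≫ quotientMap hT hS hC g hg :=
  quotientAlg_hom_ext hT P hS hC (by
    rw [quotientAlgMk_comp_quotientMap, ← Category.assoc, quotientAlgMk_comp_quotientMap,
      Category.assoc, quotientAlgMk_comp_quotientMap]
    rfl)

noncomputable def comparison : PosFunctor (ExObj T.FreeOnDiscrete) T.Algebra where
  toFunctor :=
    { obj := fun P => P.quotientAlg hT hS hC
      map := fun f => Quotient.liftOn f (fun f => quotientMap hT hS hC f.1 f.2) fun f g h =>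
        le_antisymm (quotientMap_le hT hS hC f.2 g.2 h.1) (quotientMap_le hT hS hC g.2 f.2 h.2)
      map_id := fun _ => quotientMap_id hT hS hC _
      map_comp := fun f g => Quotient.inductionOn₂ f g fun f g =>
        quotientMap_comp hT hS hC f.2 g.2 }
  map_le := fun {_ _} {f g} => Quotient.inductionOn₂ f g fun f g h =>
    quotientMap_le hT hS hC f.2 g.2 h

theorem comparison_map_surjective (g : P.quotientAlg hT hS hC ⟶ Q.quotientAlg hT hS hC) :
    ∃ f : P ⟶ Q, (comparison hT hS hC).toFunctor.map f = g := by
  obtain ⟨f, hf⟩ := soProjective_of_isFreeOnDiscrete hS P.X.2 (Q.quotientAlgMk hT hS hC)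
    (Algebra.isSo_of_surjective hT hS _ (Q.quotMk_surjective hT)) (P.quotientAlgMk hT hS hC ≫ g)
  have hfx : ∀ x, Q.quotMk hT (f.f x) = g.f (P.quotMk hT x) := Algebra.Hom.congr_f_apply hf
  have hrel : ∀ x y, P.Rel x y → Q.Rel (f.f x) (f.f y) := fun x y h => by
    rw [← Q.quotMk_le_quotMk_iff hT, hfx, hfx]
    exact g.f.hom.monotone h
  have hcompat := compat_of_map_rel hT hS hC (f := ObjectProperty.homMk f) hrel
  exact ⟨Quotient.mk _ ⟨ObjectProperty.homMk f, hcompat⟩, quotientAlg_hom_ext hT P hS hC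
    ((quotientAlgMk_comp_quotientMap hT hS hC (ObjectProperty.homMk f) hcompat).trans hf)⟩

theorem le_of_comparison_map_le (f g : P ⟶ Q)
    (h : (comparison hT hS hC).toFunctor.map f ≤ (comparison hT hS hC).toFunctor.map g) :
    f ≤ g := by
  induction f using Quotient.inductionOn with | h f => ?_
  induction g using Quotient.inductionOn with | h g => ?_
  refine pre_of_rel hT hS hC fun x => ?_
  have hx : (quotientMap hT hS hC f.1 f.2).f (P.quotMk hT x) ≤
      (quotientMap hT hS hC g.1 g.2).f (P.quotMk hT x) := h (P.quotMk hT x)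
  rwa [quotientMap_quotMk, quotientMap_quotMk] at hx

end Comparison

section Presentation

variable (hT : T.LocallyMonotone) (hS : T.PreservesSurjections)

variable {C : T.Algebra} {X R : T.FreeOnDiscrete} (e : X.obj ⟶ C)
  (p : R.obj ⟶ Algebra.commaAlg e hT) (hp : Function.Surjective p.f)

def ofPresentation : ExObj T.FreeOnDiscrete where
  X := X
  R := R
  r0 := ObjectProperty.homMk (p ≫ Algebra.commaAlg.fst e hT)
  r1 := ObjectProperty.homMk (p ≫ Algebra.commaAlg.snd e hT)
  orefl {W} a₀ a₁ h := by
    obtain ⟨w, h₀, h₁⟩ := exists_lift_comma hT hS (soProjective_of_isFreeOnDiscrete hS W.2) e p hp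
      a₀.hom a₁.hom (comp_mono' h le_rfl)
    exact ⟨ObjectProperty.homMk w, ObjectProperty.hom_ext _ h₀, ObjectProperty.hom_ext _ h₁⟩
  tra {W} u v huv := by
    have hmid : ∀ w, (p.f (u.hom.f w)).1.2 = (p.f (v.hom.f w)).1.1 :=
      FreeOnDiscrete.congr_hom_f_apply huv
    obtain ⟨t, h₀, h₁⟩ := exists_lift_comma hT hS (soProjective_of_isFreeOnDiscrete hS W.2) e p hp
      (u.hom ≫ p ≫ Algebra.commaAlg.fst e hT) (v.hom ≫ p ≫ Algebra.commaAlg.snd e hT)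
      fun w => (p.f (u.hom.f w)).2.trans ((hmid w).symm ▸ (p.f (v.hom.f w)).2)
    exact ⟨ObjectProperty.homMk t, ObjectProperty.hom_ext _ h₀, ObjectProperty.hom_ext _ h₁⟩

theorem rel_ofPresentation_iff {x y : X.obj.A} :
    (ofPresentation hT hS e p hp).Rel x y ↔ e.f x ≤ e.f y := by
  refine ⟨fun ⟨ρ, h₀, h₁⟩ => h₀ ▸ h₁ ▸ (p.f ρ).2, fun h => ?_⟩
  obtain ⟨ρ, hρ⟩ := hp ⟨(x, y), h⟩
  exact ⟨ρ, congrArg (fun q => q.1.1) hρ, congrArg (fun q => q.1.2) hρ⟩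

theorem exists_comparison_obj_iso (hC : T.PreservesCongruenceCoinserters) (C : T.Algebra) :
    ∃ P : ExObj T.FreeOnDiscrete, Nonempty ((comparison hT hS hC).toFunctor.obj P ≅ C) := by
  let K := Algebra.commaAlg (cover C) hT
  let P := ofPresentation hT hS (X := T.freeDiscrete C.A) (R := T.freeDiscrete K.A) (cover C)
    (cover K) (cover_surjective K)
  have hrel : ∀ x y, P.Rel x y ↔ (cover C).f x ≤ (cover C).f y := fun _ _ =>
    rel_ofPresentation_iff hT hS _ _ _
  obtain ⟨θ, hθ⟩ : ∃ θ : P.quotientAlg hT hS hC ⟶ C, P.quotientAlgMk hT hS hC ≫ θ = cover C :=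
    ⟨_, Algebra.comp_descOfSurjective hS _ (P.quotMk_surjective hT) _ fun x y h => (hrel x y).1 h⟩
  have hθx : ∀ x, θ.f (P.quotMk hT x) = (cover C).f x := Algebra.Hom.congr_f_apply hθ
  have : IsIso θ.f := by
    refine PartOrd.isIso_of_surjective θ.f (fun c => ?_) fun ξ ζ => ?_
    · obtain ⟨x, rfl⟩ := cover_surjective C c
      exact ⟨P.quotMk hT x, hθx x⟩
    · obtain ⟨x, rfl⟩ := P.quotMk_surjective hT ξ
      obtain ⟨y, rfl⟩ := P.quotMk_surjective hT ζ
      rw [hθx, hθx]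
      exact (hrel x y).symm
  have := Monad.algebra_iso_of_iso T θ
  exact ⟨P, ⟨(asIso θ : P.quotientAlg hT hS hC ≅ C)⟩⟩

end Presentation

end ExObj

/-- if a monad `T` on `Pos` preserves surjections then the algebras free
on discrete posets are so-projective and form a projective cover of `Pos^T`; if `T`
moreover preserves coinserters of congruences, then `Pos^T` is the exact completion of
the full subcategory of the Kleisli category on algebras free on discrete posets. -/
theorem statement19 (T : CategoryTheory.Monad PartOrd)
    (hmonoT : ∀ {X Y : PartOrd} (f g : X ⟶ Y), f ≤ g →
      T.toFunctor.map f ≤ T.toFunctor.map g)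
    (hsurjT : ∀ {X Y : PartOrd} (f : X ⟶ Y), Function.Surjective (pHom f) →
      Function.Surjective (pHom (T.toFunctor.map f))) :
    (∀ X : PartOrd, DiscretePoset X → PosEnr.SoProjective (T.free.obj X)) ∧
    (∀ A : T.Algebra, ∃ (X : PartOrd) (_ : DiscretePoset X)
      (e : T.free.obj X ⟶ A), PosEnr.IsSo e) ∧
    ((∀ {S X Q : PartOrd} (s0 s1 : S ⟶ X) (q : X ⟶ Q), PosEnr.IsCongPair s0 s1 →
        PosEnr.IsCoinserterP s0 s1 q →
        PosEnr.IsCoinserterP (T.toFunctor.map s0) (T.toFunctor.map s1)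
          (T.toFunctor.map q)) →
      ∃ G : PosFunctor (ExObj (ObjectProperty.FullSubcategory (fun A : T.Algebra =>
          ∃ X : PartOrd, DiscretePoset X ∧ Nonempty (A ≅ T.free.obj X)))) T.Algebra,
        IsEquivP G) := by
  refine ⟨fun X hX => Monad.soProjective_free hsurjT hX, fun A => ?_, fun hcoin => ?_⟩
  · exact ⟨_, PartOrd.discretePoset_discrete A.A, Monad.cover A,
      Monad.Algebra.isSo_of_surjective hmonoT hsurjT _ (Monad.cover_surjective A)⟩
  · exact ⟨ExObj.comparison hmonoT hsurjT hcoin,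
      ⟨ExObj.comparison_map_surjective hmonoT hsurjT hcoin,
        ExObj.le_of_comparison_map_le hmonoT hsurjT hcoin⟩,
      ExObj.exists_comparison_obj_iso hmonoT hsurjT hcoin⟩
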